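/- Let Q_k = 3^{2k} − 3^k + 1. For every integer k ≥ 1, there exists a pointed labeled graph (V, v₀, E) over the alphabet {0,1,2} with exactly 4^k vertices and exactly 6·4^{k−1} labeled edges whose path set X_{(V,E)}(v₀) equals X(1, Q_k), and whose underlying directed graph (with an edge u → w whenever (u, a, w) ∈ E for some label a) is strongly connected, i.e. every vertex is reachable from every vertex by a directed path. -/

import Mathlib

/-!
Since `Q_k = 1 + (3^k - 1) 3^k`, the product `Q_k x` of `x = ∑ a_i 3^i` is a long multiplication
in which column `i` receives `a_i + (3^k - 1) a_{i-k}` and a carry `c_i ∈ {0, 1}` from column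
`i - k`; it keeps the residue mod `3^k` and sends the quotient to column `i + k`. For
`a_i ∈ {0, 1}`, a residue that is `≤ 1` mod 3 is itself `≤ 1` (the bad residue `3^k - 1` is `2`
mod 3), so comparing digits shows that `Q_k x ∈ Σ` iff every residue is `0` or `1`. Hence `X(1, Q_k)` is the set of
inputs with a run, of delay `k`, of a six-edge automaton on the four states `(a_{i-k}, c_i)`.
Runs of delay `k` are paths in the graph of windows of `k` consecutive states, which has
`4^k` vertices and `6 · 4^(k-1)` edges; it is strongly connected because any two states of the
automaton are joined by a walk of length exactly 4, and `k` such walks can be interleaved.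
-/

open MeasureTheory ENNReal

noncomputable section

/-- The 3-adic Cantor set: 3-adic integers whose 3-adic expansion uses only digits 0 and 1. -/
def Sigma3 : Set ℤ_[3] :=
  {x | ∃ a : ℕ → ℕ, (∀ i, a i ≤ 1) ∧ x = ∑' i, (a i : ℤ_[3]) * 3 ^ i}

/-- `C1 M = C(1, M) = {x : x ∈ Σ and M·x ∈ Σ}`. -/
def C1 (M : ℕ) : Set ℤ_[3] :=
  {x | x ∈ Sigma3 ∧ (M : ℤ_[3]) * x ∈ Sigma3}

/-- `X1 M = X(1, M)`: the set of 3-adic digit sequences (valued in {0,1,2}) of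
elements of C(1, M). -/
def X1 (M : ℕ) : Set (ℕ → Fin 3) :=
  {a | (∑' i, ((a i : ℕ) : ℤ_[3]) * 3 ^ i) ∈ C1 M}

/-- The n-interleaving of a set of sequences. -/
def Interleave {A : Type*} (n : ℕ) (X : Set (ℕ → A)) : Set (ℕ → A) :=
  {x | ∀ j < n, (fun i => x (j + i * n)) ∈ X}


/-- The path set of a pointed labeled graph: sequences of edge labels of infinite
walks starting at `v0`. -/
def PathSetOf {A V : Type*} (E : Set (V × A × V)) (v0 : V) : Set (ℕ → A) :=
  {x | ∃ v : ℕ → V, v 0 = v0 ∧ ∀ i, (v i, x i, v (i + 1)) ∈ E}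

open Finset

namespace PadicInt

variable {p : ℕ} [Fact p.Prime]

theorem summable_mul_pow (f : ℕ → ℤ_[p]) : Summable fun i => f i * (p : ℤ_[p]) ^ i := by
  have hp : (1 : ℝ) < p := by exact_mod_cast (Fact.out : p.Prime).one_lt
  refine .of_norm_bounded (g := fun i => ((p : ℝ)⁻¹) ^ i)
    (summable_geometric_of_lt_one (by positivity) (inv_lt_one_of_one_lt₀ hp)) fun i => ?_
  rw [norm_mul, norm_pow, norm_p]
  exact mul_le_of_le_one_left (by positivity) (norm_le_one _)

theorem tsum_mul_pow_eq_sum_add (f : ℕ → ℤ_[p]) (n : ℕ) :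
    ∑' i, f i * (p : ℤ_[p]) ^ i =
      ∑ i ∈ range n, f i * (p : ℤ_[p]) ^ i + p ^ n * ∑' i, f (i + n) * (p : ℤ_[p]) ^ i := by
  rw [← (summable_mul_pow f).sum_add_tsum_nat_add n, ← (summable_mul_pow _).tsum_mul_left]
  congr 1
  exact tsum_congr fun i => by ring

theorem tsum_mul_pow_eq_pow_mul {f : ℕ → ℤ_[p]} {n : ℕ} (hf : ∀ i < n, f i = 0) :
    ∑' i, f i * (p : ℤ_[p]) ^ i = p ^ n * ∑' i, f (i + n) * (p : ℤ_[p]) ^ i := by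
  rw [tsum_mul_pow_eq_sum_add f n,
    sum_eq_zero fun i hi => by rw [hf i (mem_range.mp hi), zero_mul], zero_add]

theorem toZMod_tsum_mul_pow (f : ℕ → ℤ_[p]) :
    toZMod (∑' i, f i * (p : ℤ_[p]) ^ i) = toZMod (f 0) := by
  simp [tsum_mul_pow_eq_sum_add f 1]

theorem mod_eq_of_tsum_mul_pow_eq {e d : ℕ → ℕ}
    (h : ∑' i, (e i : ℤ_[p]) * (p : ℤ_[p]) ^ i = ∑' i, (d i : ℤ_[p]) * (p : ℤ_[p]) ^ i)
    {n : ℕ} (hlt : ∀ i < n, e i = d i) : e n % p = d n % p := by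
  rw [tsum_mul_pow_eq_sum_add _ n, tsum_mul_pow_eq_sum_add (fun i => (d i : ℤ_[p])) n,
    sum_congr rfl fun i hi => by rw [hlt i (mem_range.mp hi)]] at h
  have := congrArg toZMod (mul_left_cancel₀
    (pow_ne_zero n (Nat.cast_ne_zero.mpr (Fact.out : p.Prime).ne_zero)) (add_left_cancel h))
  rw [toZMod_tsum_mul_pow, toZMod_tsum_mul_pow] at this
  simpa [← ZMod.natCast_eq_natCast_iff'] using this

/-- With `b = p` this is the uniqueness of `p`-adic digits; with `b < p` it also applies to
coefficients `e i ≥ p`. -/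
theorem eq_of_tsum_mul_pow_eq {e d : ℕ → ℕ} {b : ℕ} (hb : b ≤ p) (hd : ∀ i, d i < b)
    (he : ∀ i, e i % p < b → e i < b)
    (h : ∑' i, (e i : ℤ_[p]) * (p : ℤ_[p]) ^ i = ∑' i, (d i : ℤ_[p]) * (p : ℤ_[p]) ^ i) :
    e = d := by
  funext n
  induction n using Nat.strong_induction_on with
  | _ n ih =>
    have hmod := mod_eq_of_tsum_mul_pow_eq h ih
    rw [Nat.mod_eq_of_lt ((hd n).trans_le hb)] at hmod
    have hen := he n (hmod ▸ hd n)
    rwa [Nat.mod_eq_of_lt (hen.trans_le hb)] at hmod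

/-- Long multiplication by `p ^ (2K) - p ^ K + 1 = 1 + (p ^ K - 1) p ^ K`: column `i` keeps `e i`
and passes the carry `c (i + K)` on, `K` places to the left. -/
theorem tsum_mul_pow_eq_mul_of_carry {K : ℕ} {a b c e : ℕ → ℕ} (hb : ∀ i < K, b i = 0)
    (hbK : ∀ i, b (i + K) = a i) (hc : ∀ i < K, c i = 0)
    (hcol : ∀ i, a i + (p ^ K - 1) * b i + c i = e i + p ^ K * c (i + K)) :
    ∑' i, (e i : ℤ_[p]) * (p : ℤ_[p]) ^ i =
      ((p ^ (2 * K) - p ^ K + 1 : ℕ) : ℤ_[p]) * ∑' i, (a i : ℤ_[p]) * (p : ℤ_[p]) ^ i := by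
  have hp : 0 < p := (Fact.out : p.Prime).pos
  have hsum := fun f : ℕ → ℕ => (summable_mul_pow fun i => (f i : ℤ_[p])).hasSum
  have hB : ∑' i, (b i : ℤ_[p]) * (p : ℤ_[p]) ^ i =
      p ^ K * ∑' i, (a i : ℤ_[p]) * (p : ℤ_[p]) ^ i := by
    simp [tsum_mul_pow_eq_pow_mul (f := fun i => (b i : ℤ_[p])) (by simpa using hb), hbK]
  have hC := tsum_mul_pow_eq_pow_mul (f := fun i => (c i : ℤ_[p])) (n := K) (by simpa using hc)
  have hcol' : ∀ i, (e i : ℤ_[p]) * (p : ℤ_[p]) ^ i =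
      a i * (p : ℤ_[p]) ^ i + (p ^ K - 1) * (b i * (p : ℤ_[p]) ^ i) + c i * (p : ℤ_[p]) ^ i -
        p ^ K * (c (i + K) * (p : ℤ_[p]) ^ i) := by
    intro i
    have := congrArg (Nat.cast : ℕ → ℤ_[p]) (hcol i)
    push_cast [Nat.one_le_pow _ _ hp] at this
    linear_combination -(p : ℤ_[p]) ^ i * this
  rw [tsum_congr hcol', ((((hsum a).add ((hsum b).mul_left _)).add (hsum c)).sub
    ((hsum fun i => c (i + K)).mul_left _)).tsum_eq, hB, hC,
    Nat.cast_add, Nat.cast_sub (Nat.pow_le_pow_right hp (by omega))]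
  push_cast
  ring

end PadicInt

section WindowGraph

variable {S A : Type*}

/-- A run of delay `m + 1`, i.e. `σ : ℕ → S` with `(σ i, x i, σ (i + m + 1)) ∈ B` for all `i`,
is a path of this graph through the windows `(σ i, …, σ (i + m))`. -/
def windowEdges (B : Set (S × A × S)) (m : ℕ) :
    Set ((Fin (m + 1) → S) × A × (Fin (m + 1) → S)) :=
  {t | Fin.tail t.1 = Fin.init t.2.2 ∧ (t.1 0, t.2.1, t.2.2 (Fin.last m)) ∈ B}

variable {B : Set (S × A × S)} {m : ℕ}

theorem mem_pathSetOf_windowEdges {v₀ : Fin (m + 1) → S} {x : ℕ → A} :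
    x ∈ PathSetOf (windowEdges B m) v₀ ↔
      ∃ σ : ℕ → S, (∀ j : Fin (m + 1), σ j = v₀ j) ∧ ∀ i, (σ i, x i, σ (i + (m + 1))) ∈ B := by
  constructor
  · rintro ⟨v, rfl, hv⟩
    have hshift : ∀ (j : Fin (m + 1)) (i : ℕ), v i j = v (i + j) 0 := by
      intro j
      induction j using Fin.induction with
      | zero => intro i; rfl
      | succ j ih =>
        intro i
        have h := congrFun (hv i).1 j
        simp only [Fin.tail, Fin.init] at h
        rw [h, ih, Fin.val_castSucc, Fin.val_succ, add_right_comm, add_assoc]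
    refine ⟨fun i => v i 0, fun j => by simp [hshift j 0], fun i => ?_⟩
    have h := (hv i).2
    dsimp only at h ⊢
    rwa [hshift (Fin.last m), Fin.val_last, add_right_comm, add_assoc] at h
  · rintro ⟨σ, hσ, hstep⟩
    refine ⟨fun i j => σ (i + j), funext fun j => by simp [hσ], fun i => ⟨?_, ?_⟩⟩
    · funext j
      simp only [Fin.tail_def, Fin.init_def, Fin.val_succ, Fin.val_castSucc]
      ring_nf
    · simpa [add_right_comm _ 1, add_assoc] using hstep i

def windowEdgesEquiv (B : Set (S × A × S)) (m : ℕ) : windowEdges B m ≃ B × (Fin m → S) where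
  toFun t := (⟨(t.1.1 0, t.1.2.1, t.1.2.2 (Fin.last m)), t.2.2⟩, Fin.tail t.1.1)
  invFun q := ⟨(Fin.cons q.1.1.1 q.2, q.1.1.2.1, Fin.snoc q.2 q.1.1.2.2),
    by simp [windowEdges]⟩
  left_inv := by
    rintro ⟨⟨v, l, w⟩, hvw, hB⟩
    dsimp only at hvw
    refine Subtype.ext (Prod.ext (Fin.cons_self_tail v) (Prod.ext rfl ?_))
    change Fin.snoc (Fin.tail v) (w (Fin.last m)) = w
    rw [hvw, Fin.snoc_init_self]
  right_inv := by
    rintro ⟨⟨⟨s, l, s'⟩, hB⟩, g⟩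
    simp

theorem ncard_windowEdges : (windowEdges B m).ncard = B.ncard * Nat.card S ^ m := by
  rw [← Nat.card_coe_set_eq, Nat.card_congr (windowEdgesEquiv B m), Nat.card_prod,
    Nat.card_coe_set_eq, Nat.card_fun, Nat.card_fin]

theorem reflTransGen_windowEdges {N : ℕ}
    (hwalk : ∀ s t : S, ∃ f : ℕ → S, f 0 = s ∧ f N = t ∧ ∀ i < N, ∃ l, (f i, l, f (i + 1)) ∈ B)
    (u w : Fin (m + 1) → S) :
    Relation.ReflTransGen (fun v v' => ∃ l, (v, l, v') ∈ windowEdges B m) u w := by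
  choose f hf0 hfN hstep using hwalk
  -- coordinate `j` of the window follows the walk from `u j` to `w j`, one step every `m + 1` moves
  let σ : ℕ → S := fun n => f (u (Fin.ofNat (m + 1) n)) (w (Fin.ofNat (m + 1) n)) (n / (m + 1))
  have hσ : ∀ j : Fin (m + 1), ∀ k, σ (k * (m + 1) + j) = f (u j) (w j) k := by
    intro j k
    have hj : Fin.ofNat (m + 1) (k * (m + 1) + j) = j := by ext; simp [Fin.is_le]
    simp only [σ, hj]
    rw [Nat.add_comm, Nat.add_mul_div_right _ _ m.succ_pos, Nat.div_eq_of_lt j.isLt, zero_add]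
  let W : ℕ → Fin (m + 1) → S := fun n j => σ (n + j)
  have hW : ∀ n < N * (m + 1), ∃ l, (W n, l, W (n + 1)) ∈ windowEdges B m := by
    intro n hn
    obtain ⟨l, hl⟩ := hstep (u (Fin.ofNat (m + 1) n)) (w (Fin.ofNat (m + 1) n)) (n / (m + 1))
      ((Nat.div_lt_iff_lt_mul m.succ_pos).2 hn)
    refine ⟨l, funext fun j => ?_, ?_⟩
    · simp only [W, Fin.tail, Fin.init, Fin.val_succ, Fin.val_castSucc, add_right_comm, add_assoc]
    · have hn : n = n / (m + 1) * (m + 1) + Fin.ofNat (m + 1) n := by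
        simp [Nat.div_add_mod']
      change (σ (n + 0), l, σ (n + 1 + m)) ∈ B
      rwa [show n + 1 + m = (n / (m + 1) + 1) * (m + 1) + Fin.ofNat (m + 1) n by
        rw [add_mul]; omega, add_zero, hn, hσ, hσ, ← hn]
  have hrt : Relation.ReflTransGen (fun i j => ∃ l, (W i, l, W j) ∈ windowEdges B m)
      0 (N * (m + 1)) :=
    reflTransGen_of_succ_of_le _ (fun n hn => by simpa using hW n hn.2) (Nat.zero_le _)
  convert Relation.ReflTransGen.lift (p := fun v v' => ∃ l, (v, l, v') ∈ windowEdges B m) W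
    (fun _ _ h => h) _ _ hrt using 1 <;> funext j
  · simpa [W, hf0] using (hσ j 0).symm
  · simpa [W, hfN] using (hσ j N).symm

end WindowGraph

namespace Qk

theorem mod_lt_two_of_mod_three_lt_two {N x y z : ℕ} (hN : 3 ∣ N) (hx : x ≤ 1) (hy : y ≤ 1)
    (hz : z ≤ 1) (h : (x + (N - 1) * y + z) % N % 3 < 2) : (x + (N - 1) * y + z) % N < 2 := by
  obtain ⟨q, rfl⟩ := hN
  rcases Nat.eq_zero_or_pos q with rfl | hq
  · simp only [mul_zero, Nat.mod_zero] at h ⊢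
    omega
  have hdiv := Nat.mod_add_div (x + (3 * q - 1) * y + z) (3 * q)
  have hmod := Nat.mod_lt (x + (3 * q - 1) * y + z) (by omega : 0 < 3 * q)
  have hk : (x + (3 * q - 1) * y + z) / (3 * q) < 2 := by
    rw [Nat.div_lt_iff_lt_mul (by omega)]
    interval_cases y <;> omega
  generalize (x + (3 * q - 1) * y + z) / (3 * q) = k at *
  generalize (x + (3 * q - 1) * y + z) % (3 * q) = r at *
  interval_cases y <;> interval_cases k <;> omega

section Carry

variable (K : ℕ) (a : ℕ → ℕ)

def delay (i : ℕ) : ℕ := if i < K then 0 else a (i - K)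

/-- The guard `0 < K` only serves the termination proof. -/
def carry (i : ℕ) : ℕ :=
  if 0 < K ∧ K ≤ i then
    (a (i - K) + (3 ^ K - 1) * delay K a (i - K) + carry (i - K)) / 3 ^ K
  else 0
termination_by i
decreasing_by omega

def columnSum (i : ℕ) : ℕ := a i + (3 ^ K - 1) * delay K a i + carry K a i

variable {K a}

theorem delay_of_lt {i : ℕ} (h : i < K) : delay K a i = 0 := if_pos h

theorem delay_add (i : ℕ) : delay K a (i + K) = a i := by simp [delay]

theorem delay_le_one (ha : ∀ i, a i ≤ 1) (i : ℕ) : delay K a i ≤ 1 := by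
  unfold delay; split_ifs <;> simp [ha]

theorem carry_of_lt {i : ℕ} (h : i < K) : carry K a i = 0 := by
  rw [carry, if_neg (by omega)]

theorem carry_add (hK : 0 < K) (i : ℕ) : carry K a (i + K) = columnSum K a i / 3 ^ K := by
  rw [carry, if_pos (by omega), Nat.add_sub_cancel, columnSum]

theorem carry_le_one (ha : ∀ i, a i ≤ 1) (i : ℕ) : carry K a i ≤ 1 := by
  induction i using Nat.strong_induction_on with
  | _ i ih =>
    rw [carry]
    split_ifs with h
    · have hd : (3 ^ K - 1) * delay K a (i - K) ≤ 3 ^ K - 1 :=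
        mul_le_of_le_one_right (Nat.zero_le _) (delay_le_one ha _)
      have h3 : 1 < 3 ^ K := Nat.one_lt_pow h.1.ne' (by norm_num)
      have := ha (i - K)
      have := ih (i - K) (by omega)
      exact Nat.le_of_lt_succ ((Nat.div_lt_iff_lt_mul (by positivity)).2 (by omega))
    · exact zero_le_one

theorem columnSum_eq (hK : 0 < K) (i : ℕ) :
    columnSum K a i = columnSum K a i % 3 ^ K + 3 ^ K * carry K a (i + K) := by
  rw [carry_add hK, Nat.mod_add_div]

theorem columnSum_mod_lt_two (hK : 0 < K) (ha : ∀ i, a i ≤ 1) (i : ℕ)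
    (h : columnSum K a i % 3 ^ K % 3 < 2) : columnSum K a i % 3 ^ K < 2 :=
  mod_lt_two_of_mod_three_lt_two (dvd_pow_self 3 hK.ne') (ha i) (delay_le_one ha i)
    (carry_le_one ha i) h

end Carry


/-- The state at position `i` is the pair `(a (i - K), c i)` of the delayed digit and the carry
arriving at column `i`; an edge `(s, l, s')` of `carryEdges` is one column of the long
multiplication, from position `i` to position `i + K`, reading the digit `l = a i`. -/
abbrev CarryState : Type := Fin 2 × Fin 2

def carryEdges : Finset (CarryState × Fin 3 × CarryState) :=
  {((0, 0), 0, (0, 0)), ((0, 0), 1, (1, 0)), ((1, 0), 1, (1, 1)),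
   ((1, 1), 1, (1, 1)), ((1, 1), 0, (0, 1)), ((0, 1), 0, (0, 0))}

theorem mem_carryEdges_iff {N : ℕ} (hN : 3 ≤ N) {s s' : CarryState} {l : Fin 3} :
    (s, l, s') ∈ carryEdges ↔ (s'.1 : ℕ) = l ∧ N * s'.2 ≤ l + (N - 1) * s.1 + s.2 ∧
      l + (N - 1) * s.1 + s.2 ≤ N * s'.2 + 1 := by
  obtain ⟨p, c⟩ := s
  obtain ⟨p', c'⟩ := s'
  fin_cases p <;> fin_cases c <;> fin_cases l <;> fin_cases p' <;> fin_cases c' <;>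
    simp [carryEdges] <;> omega

set_option synthInstance.maxSize 1000 in
theorem exists_walk_four_carryEdges (s t : CarryState) :
    ∃ f : ℕ → CarryState, f 0 = s ∧ f 4 = t ∧ ∀ i < 4, ∃ l, (f i, l, f (i + 1)) ∈ carryEdges := by
  have hwalk : ∀ s t : CarryState, ∃ a b c : CarryState,
      (∃ l, (s, l, a) ∈ carryEdges) ∧ (∃ l, (a, l, b) ∈ carryEdges) ∧
      (∃ l, (b, l, c) ∈ carryEdges) ∧ (∃ l, (c, l, t) ∈ carryEdges) := by
    decide
  obtain ⟨a, b, c, h₀, h₁, h₂, h₃⟩ := hwalk s t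
  refine ⟨fun i => [s, a, b, c, t].getD i t, rfl, rfl, fun i hi => ?_⟩
  interval_cases i <;> assumption

variable {K : ℕ}

theorem mem_X1_of_run (hK : 0 < K) {x : ℕ → Fin 3} {σ : ℕ → CarryState}
    (h0 : ∀ i < K, σ i = (0, 0)) (hσ : ∀ i, (σ i, x i, σ (i + K)) ∈ carryEdges) :
    x ∈ X1 (3 ^ (2 * K) - 3 ^ K + 1) := by
  have hstep := fun i => (mem_carryEdges_iff (Nat.le_self_pow hK.ne' 3)).1 (hσ i)
  have hx : ∀ i, (x i : ℕ) ≤ 1 := fun i => by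
    have := (σ (i + K)).1.isLt
    have := (hstep i).1
    omega
  refine ⟨⟨fun i => x i, hx, rfl⟩, fun i => x i + (3 ^ K - 1) * (σ i).1 + (σ i).2 -
    3 ^ K * (σ (i + K)).2, fun i => ?_, ?_⟩
  · have := hstep i
    dsimp only
    omega
  · refine (PadicInt.tsum_mul_pow_eq_mul_of_carry (b := fun i => (σ i).1) (c := fun i => (σ i).2)
      (fun i hi => by simp [h0 i hi]) (fun i => (hstep i).1) (fun i hi => by simp [h0 i hi])
      fun i => ?_).symm
    have := hstep i
    omega

theorem exists_run_of_mem_X1 (hK : 0 < K) {x : ℕ → Fin 3} (hx : x ∈ X1 (3 ^ (2 * K) - 3 ^ K + 1)) :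
    ∃ σ : ℕ → CarryState, (∀ i < K, σ i = (0, 0)) ∧ ∀ i, (σ i, x i, σ (i + K)) ∈ carryEdges := by
  obtain ⟨⟨a', ha', hxa⟩, d, hd, hQd⟩ := hx
  set a : ℕ → ℕ := fun i => x i
  have ha : ∀ i, a i ≤ 1 := by
    have := PadicInt.eq_of_tsum_mul_pow_eq (p := 3) le_rfl
      (fun i => (ha' i).trans_lt (by norm_num)) (fun i _ => (x i).isLt) hxa
    intro i
    rw [show a i = a' i from congrFun this i]
    exact ha' i
  have he : (fun i => columnSum K a i % 3 ^ K) = d :=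
    PadicInt.eq_of_tsum_mul_pow_eq (p := 3) (by norm_num) (fun i => Nat.lt_succ_of_le (hd i))
      (columnSum_mod_lt_two hK ha)
      ((PadicInt.tsum_mul_pow_eq_mul_of_carry (fun i hi => delay_of_lt hi) delay_add
        (fun i hi => carry_of_lt hi) (columnSum_eq hK)).trans hQd)
  refine ⟨fun i => (⟨delay K a i, Nat.lt_succ_of_le (delay_le_one ha i)⟩,
    ⟨carry K a i, Nat.lt_succ_of_le (carry_le_one ha i)⟩), fun i hi => ?_, fun i => ?_⟩
  · simp [delay_of_lt hi, carry_of_lt hi]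
  · have hcol := columnSum_eq (a := a) hK i
    have hdi := congrFun he i ▸ hd i
    have hai : a i = x i := rfl
    refine (mem_carryEdges_iff (Nat.le_self_pow hK.ne' 3)).2
      ⟨delay_add (K := K) (a := a) i, ?_, ?_⟩ <;>
      simp only [columnSum] at hcol hdi ⊢ <;> omega

theorem mem_X1_iff_exists_run (hK : 0 < K) {x : ℕ → Fin 3} :
    x ∈ X1 (3 ^ (2 * K) - 3 ^ K + 1) ↔
      ∃ σ : ℕ → CarryState, (∀ i < K, σ i = (0, 0)) ∧ ∀ i, (σ i, x i, σ (i + K)) ∈ carryEdges :=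
  ⟨exists_run_of_mem_X1 hK, fun ⟨_, h0, hσ⟩ => mem_X1_of_run hK h0 hσ⟩

end Qk

/-- For every k ≥ 1 there is a pointed labeled graph over {0,1,2} with 4^k vertices and
6·4^{k−1} labeled edges presenting X(1, Q_k), whose underlying directed graph is
strongly connected. -/
theorem Qk_presentation (k : ℕ) (hk : 1 ≤ k) :
    ∃ (V : Type) (hV : Fintype V) (v0 : V) (E : Set (V × Fin 3 × V)),
      @Fintype.card V hV = 4 ^ k ∧
      E.ncard = 6 * 4 ^ (k - 1) ∧
      PathSetOf E v0 = X1 (3 ^ (2 * k) - 3 ^ k + 1) ∧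
      ∀ u w : V, Relation.ReflTransGen (fun a b => ∃ l, (a, l, b) ∈ E) u w := by
  obtain ⟨m, rfl⟩ : ∃ m, k = m + 1 := ⟨k - 1, by omega⟩
  refine ⟨Fin (m + 1) → Qk.CarryState, inferInstance, fun _ => (0, 0),
    windowEdges (Qk.carryEdges : Set _) m, by simp, ?_, ?_,
    reflTransGen_windowEdges Qk.exists_walk_four_carryEdges⟩
  · rw [ncard_windowEdges, Set.ncard_coe_finset, Nat.card_eq_fintype_card]
    rfl
  · ext x
    rw [mem_pathSetOf_windowEdges, Qk.mem_X1_iff_exists_run m.succ_pos]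
    simp [Fin.forall_iff]

end
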